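/- arXiv:2512.07556 — 3 statements merged into one kernel-verified Lean document; each statement's English description precedes it below -/
import Mathlib

section
/- If N(x) ≥ 0 for all x ∈ [x₋, x₊], then T is monotonically increasing on (0, E₀): T(E₁) ≤ T(E₂) for all 0 < E₁ ≤ E₂ < E₀. If N(x) ≤ 0 for all x ∈ [x₋, x₊], then T is monotonically decreasing on (0, E₀): T(E₁) ≥ T(E₂) for all 0 < E₁ ≤ E₂ < E₀. (This is Chicone's criterion, the special case G(y) = y²/2 of the main theorem.) -/
open Set

/-- Chicone's function `N(x)` built from the potential `F`. -/
noncomputable def Nfun (F : ℝ → ℝ) (x : ℝ) : ℝ :=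
  6 * F x * (deriv (deriv F) x) ^ 2 - 3 * (deriv F x) ^ 2 * deriv (deriv F) x
    - 2 * F x * deriv F x * deriv (deriv (deriv F)) x

open Filter Topology MeasureTheory


noncomputable section ChiconeAux


open Classical in
/-- Inverse of `F` on `[0, xp]`. -/
noncomputable def Xinv (F : ℝ → ℝ) (xp : ℝ) (v : ℝ) : ℝ :=
  if h : ∃ x ∈ Icc 0 xp, F x = v then h.choose else 0

/-- `(F')² - 2 F F''` over `(F')³`. -/
noncomputable def Gfun (F : ℝ → ℝ) (x : ℝ) : ℝ :=
  ((deriv F x) ^ 2 - 2 * F x * deriv (deriv F) x) / (deriv F x) ^ 3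

noncomputable def mfun (F : ℝ → ℝ) (xp v : ℝ) : ℝ := Gfun F (Xinv F xp v)

noncomputable def psiP (F : ℝ → ℝ) (xp v : ℝ) : ℝ :=
  Real.sqrt v / deriv F (Xinv F xp v)

/-- One side of the potential well. -/
structure GoodSide (F : ℝ → ℝ) (E₀ xp : ℝ) : Prop where
  smooth : ContDiff ℝ (⊤ : ℕ∞) F
  f0 : F 0 = 0
  d0 : deriv F 0 = 0
  dd0 : 0 < deriv (deriv F) 0
  hxp : 0 < xp
  hE₀ : 0 < E₀
  fxp : F xp = E₀
  dpos : ∀ x ∈ Ioc 0 xp, 0 < deriv F x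

namespace GoodSide

variable {F : ℝ → ℝ} {E₀ xp : ℝ} (h : GoodSide F E₀ xp)
include h

theorem contF : Continuous F := h.smooth.continuous

theorem contD1 : ContDiff ℝ (⊤ : ℕ∞) (deriv F) :=
  (contDiff_infty_iff_deriv.mp h.smooth).2

theorem contD2 : ContDiff ℝ (⊤ : ℕ∞) (deriv (deriv F)) :=
  (contDiff_infty_iff_deriv.mp h.contD1).2

theorem hasDerivF (x : ℝ) : HasDerivAt F (deriv F x) x :=
  ((contDiff_infty_iff_deriv.mp h.smooth).1 x).hasDerivAt

theorem hasDerivD1 (x : ℝ) : HasDerivAt (deriv F) (deriv (deriv F) x) x :=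
  ((contDiff_infty_iff_deriv.mp h.contD1).1 x).hasDerivAt

theorem hasDerivD2 (x : ℝ) :
    HasDerivAt (deriv (deriv F)) (deriv (deriv (deriv F)) x) x :=
  ((contDiff_infty_iff_deriv.mp h.contD2).1 x).hasDerivAt

theorem sm : StrictMonoOn F (Icc 0 xp) := by
  apply strictMonoOn_of_deriv_pos (convex_Icc 0 xp) h.contF.continuousOn
  intro x hx
  rw [interior_Icc] at hx
  exact h.dpos x ⟨hx.1, hx.2.le⟩

theorem X_spec {v : ℝ} (hv : v ∈ Icc 0 E₀) :
    Xinv F xp v ∈ Icc 0 xp ∧ F (Xinv F xp v) = v := by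
  have hex : ∃ x ∈ Icc 0 xp, F x = v := by
    have := intermediate_value_Icc h.hxp.le h.contF.continuousOn
    rw [h.f0, h.fxp] at this
    obtain ⟨x, hx1, hx2⟩ := this hv
    exact ⟨x, hx1, hx2⟩
  simp only [Xinv, dif_pos hex]
  exact hex.choose_spec

theorem mem_Icc_map {x : ℝ} (hx : x ∈ Icc 0 xp) : F x ∈ Icc 0 E₀ := by
  constructor
  · rw [← h.f0]; exact h.sm.monotoneOn (left_mem_Icc.mpr h.hxp.le) hx hx.1
  · rw [← h.fxp]; exact h.sm.monotoneOn hx (right_mem_Icc.mpr h.hxp.le) hx.2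

theorem X_leftInv {x : ℝ} (hx : x ∈ Icc 0 xp) : Xinv F xp (F x) = x := by
  have hv := h.mem_Icc_map hx
  have hs := h.X_spec hv
  exact h.sm.injOn hs.1 hx hs.2

theorem X_zero : Xinv F xp 0 = 0 := by
  have := h.X_leftInv (left_mem_Icc.mpr h.hxp.le)
  rwa [h.f0] at this

theorem X_mem_Ioo {v : ℝ} (hv : v ∈ Ioo 0 E₀) : Xinv F xp v ∈ Ioo 0 xp := by
  obtain ⟨hm, hf⟩ := h.X_spec ⟨hv.1.le, hv.2.le⟩
  rcases hm.1.lt_or_eq with h1 | h1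
  · rcases hm.2.lt_or_eq with h2 | h2
    · exact ⟨h1, h2⟩
    · rw [h2, h.fxp] at hf; exact absurd hf.symm hv.2.ne
  · rw [← h1, h.f0] at hf; exact absurd hf.symm hv.1.ne'

theorem X_strictMono : StrictMonoOn (Xinv F xp) (Icc 0 E₀) := by
  intro u hu v hv huv
  have hsu := h.X_spec hu
  have hsv := h.X_spec hv
  have : F (Xinv F xp u) < F (Xinv F xp v) := by rw [hsu.2, hsv.2]; exact huv
  exact (h.sm.lt_iff_lt hsu.1 hsv.1).mp this

theorem derivF_pos_X {v : ℝ} (hv : v ∈ Ioo 0 E₀) : 0 < deriv F (Xinv F xp v) := by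
  have hxm := h.X_mem_Ioo hv
  exact h.dpos _ ⟨hxm.1, hxm.2.le⟩

theorem hasStrictDerivAt_X {v : ℝ} (hv : v ∈ Ioo 0 E₀) :
    HasStrictDerivAt (Xinv F xp) (deriv F (Xinv F xp v))⁻¹ v := by
  set x := Xinv F xp v with hx
  have hxm : x ∈ Ioo 0 xp := h.X_mem_Ioo hv
  have hsF : HasStrictDerivAt F (deriv F x) x :=
    h.smooth.hasStrictDerivAt (by simp)
  have hne : deriv F x ≠ 0 := (h.dpos x ⟨hxm.1, hxm.2.le⟩).ne'
  have hev : ∀ᶠ y in 𝓝 x, Xinv F xp (F y) = y := by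
    filter_upwards [Ioo_mem_nhds hxm.1 hxm.2] with y hy
    exact h.X_leftInv ⟨hy.1.le, hy.2.le⟩
  have h2 := hsF.to_local_left_inverse hne hev
  rwa [(h.X_spec ⟨hv.1.le, hv.2.le⟩).2] at h2

theorem contX_at {v : ℝ} (hv : v ∈ Ioo 0 E₀) : ContinuousAt (Xinv F xp) v :=
  (h.hasStrictDerivAt_X hv).hasDerivAt.continuousAt

theorem contX_within_zero : ContinuousWithinAt (Xinv F xp) (Icc 0 E₀) 0 := by
  rw [ContinuousWithinAt, h.X_zero, Metric.tendsto_nhdsWithin_nhds]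
  intro ε hε
  set ε' := min ε xp with hε'def
  have hε'0 : 0 < ε' := lt_min hε h.hxp
  have hε'xp : ε' ∈ Icc (0:ℝ) xp := ⟨hε'0.le, min_le_right _ _⟩
  have hFε' : 0 < F ε' := by
    rw [← h.f0]; exact h.sm (left_mem_Icc.mpr h.hxp.le) hε'xp hε'0
  refine ⟨F ε', hFε', fun {v} hv hd => ?_⟩
  obtain ⟨hm, hf⟩ := h.X_spec hv
  rw [Real.dist_eq, sub_zero, abs_of_nonneg hv.1] at hd
  rw [Real.dist_eq, sub_zero, abs_of_nonneg hm.1]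
  have hlt : F (Xinv F xp v) < F ε' := by rw [hf]; exact hd
  have : Xinv F xp v < ε' := by
    by_contra hcon
    push_neg at hcon
    exact absurd (h.sm.monotoneOn hε'xp hm hcon) (not_le.mpr hlt)
  exact this.trans_le (min_le_left _ _)

theorem tendsto_X_zero :
    Tendsto (Xinv F xp) (𝓝[Ioo 0 E₀] 0) (𝓝[>] (0:ℝ)) := by
  rw [tendsto_nhdsWithin_iff]
  constructor
  · have := h.contX_within_zero
    rw [ContinuousWithinAt, h.X_zero] at this
    exact this.mono_left (nhdsWithin_mono _ Ioo_subset_Icc_self)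
  · filter_upwards [self_mem_nhdsWithin] with v hv
    exact (h.X_mem_Ioo hv).1


theorem hasDerivAt_G {x : ℝ} (hne : deriv F x ≠ 0) :
    HasDerivAt (Gfun F) (Nfun F x / (deriv F x) ^ 4) x := by
  have hP : HasDerivAt (fun y => (deriv F y) ^ 2 - 2 * F y * deriv (deriv F) y)
      (2 * deriv F x ^ 1 * deriv (deriv F) x
        - (2 * deriv F x * deriv (deriv F) x + 2 * F x * deriv (deriv (deriv F)) x)) x :=
    ((h.hasDerivD1 x).pow 2).sub
      ((((h.hasDerivF x).const_mul 2)).mul (h.hasDerivD2 x))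
  have hQ : HasDerivAt (fun y => (deriv F y) ^ 3)
      (3 * deriv F x ^ 2 * deriv (deriv F) x) x := (h.hasDerivD1 x).pow 3
  have hG := hP.div hQ (pow_ne_zero 3 hne)
  refine HasDerivAt.congr_deriv (f := Gfun F) hG ?_
  rw [Nfun]
  field_simp
  ring

theorem hasDerivAt_m {v : ℝ} (hv : v ∈ Ioo 0 E₀) :
    HasDerivAt (mfun F xp)
      (Nfun F (Xinv F xp v) / (deriv F (Xinv F xp v)) ^ 5) v := by
  have hne : deriv F (Xinv F xp v) ≠ 0 := (h.derivF_pos_X hv).ne'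
  have hX := (h.hasStrictDerivAt_X hv).hasDerivAt
  have hG := h.hasDerivAt_G hne
  have hc := hG.comp v hX
  have : HasDerivAt (mfun F xp)
      (Nfun F (Xinv F xp v) / deriv F (Xinv F xp v) ^ 4 * (deriv F (Xinv F xp v))⁻¹) v := hc
  convert this using 1
  rw [← div_eq_mul_inv, div_div, ← pow_succ]

theorem hasDerivAt_psi {v : ℝ} (hv : v ∈ Ioo 0 E₀) :
    HasDerivAt (psiP F xp) (mfun F xp v / (2 * Real.sqrt v)) v := by
  set x := Xinv F xp v with hxdef
  have hne : deriv F x ≠ 0 := (h.derivF_pos_X hv).ne'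
  have hX := (h.hasStrictDerivAt_X hv).hasDerivAt
  have hs : HasDerivAt Real.sqrt (1 / (2 * Real.sqrt v)) v := Real.hasDerivAt_sqrt hv.1.ne'
  have hd : HasDerivAt (fun w => deriv F (Xinv F xp w))
      (deriv (deriv F) x * (deriv F x)⁻¹) v := by
    have := (h.hasDerivD1 x).comp v hX; exact this
  have hdiv := hs.div hd hne
  have hFx : F x = v := (h.X_spec ⟨hv.1.le, hv.2.le⟩).2
  have hsq : Real.sqrt v ^ 2 = v := Real.sq_sqrt hv.1.le
  have hsne : Real.sqrt v ≠ 0 := (Real.sqrt_pos.mpr hv.1).ne'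
  have e1 : mfun F xp v
      = ((deriv F x) ^ 2 - 2 * (Real.sqrt v) ^ 2 * (deriv (deriv F) x)) / (deriv F x) ^ 3 := by
    rw [mfun, Gfun, ← hxdef, hFx, hsq]
  have e2 : psiP F xp v = Real.sqrt v / deriv F (Xinv F xp v) := rfl
  rw [e1]
  refine HasDerivAt.congr_deriv (f := psiP F xp) hdiv ?_
  rw [← hxdef]
  field_simp


theorem contD3 : Continuous (deriv (deriv (deriv F))) :=
  (contDiff_infty_iff_deriv.mp h.contD2).2.continuous

theorem eventually_pos : ∀ᶠ x in 𝓝[>] (0:ℝ),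
    0 < deriv F x ∧ 0 < deriv (deriv F) x := by
  have h1 : ∀ᶠ x in 𝓝 (0:ℝ), 0 < deriv (deriv F) x :=
    (h.contD2.continuous.continuousAt).eventually (eventually_gt_nhds h.dd0)
  filter_upwards [Ioo_mem_nhdsGT_of_mem (left_mem_Ico.mpr h.hxp),
    h1.filter_mono nhdsWithin_le_nhds] with x hx hx2
  exact ⟨h.dpos x ⟨hx.1, hx.2.le⟩, hx2⟩

theorem tendsto_FdivSq :
    Tendsto (fun x => F x / (deriv F x) ^ 2) (𝓝[>] (0:ℝ))
      (𝓝 (1 / (2 * deriv (deriv F) 0))) := by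
  apply HasDerivAt.lhopital_zero_nhdsGT
    (f' := deriv F) (g' := fun x => 2 * deriv F x ^ 1 * deriv (deriv F) x)
  · exact Eventually.of_forall h.hasDerivF
  · exact Eventually.of_forall fun x => (h.hasDerivD1 x).pow 2
  · filter_upwards [h.eventually_pos] with x hx
    exact (mul_pos (mul_pos two_pos (pow_pos hx.1 1)) hx.2).ne'
  · have := (h.contF.tendsto 0).mono_left (nhdsWithin_le_nhds (s := Ioi (0:ℝ)))
    rwa [h.f0] at this
  · have := ((h.contD1.continuous.tendsto 0).pow 2).mono_left
      (nhdsWithin_le_nhds (s := Ioi (0:ℝ)))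
    rwa [h.d0, zero_pow two_ne_zero] at this
  · have hden : Tendsto (fun x => 1 / (2 * deriv (deriv F) x)) (𝓝[>] (0:ℝ))
        (𝓝 (1 / (2 * deriv (deriv F) 0))) := by
      apply Tendsto.div tendsto_const_nhds
        (((h.contD2.continuous.tendsto 0).const_mul 2).mono_left nhdsWithin_le_nhds)
      exact (mul_pos two_pos h.dd0).ne'
    apply hden.congr'
    filter_upwards [h.eventually_pos] with x hx
    rw [pow_one]
    field_simp [hx.1.ne', hx.2.ne']

theorem tendsto_G :
    Tendsto (Gfun F) (𝓝[>] (0:ℝ))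
      (𝓝 (-(deriv (deriv (deriv F)) 0) / (3 * (deriv (deriv F) 0) ^ 2))) := by
  have key : Tendsto (fun x => ((deriv F x) ^ 2 - 2 * F x * deriv (deriv F) x)
      / (deriv F x) ^ 3) (𝓝[>] (0:ℝ))
      (𝓝 (-(deriv (deriv (deriv F)) 0) / (3 * (deriv (deriv F) 0) ^ 2))) := by
    apply HasDerivAt.lhopital_zero_nhdsGT
      (f' := fun x => 2 * deriv F x ^ 1 * deriv (deriv F) x
        - (2 * deriv F x * deriv (deriv F) x + 2 * F x * deriv (deriv (deriv F)) x))
      (g' := fun x => 3 * deriv F x ^ 2 * deriv (deriv F) x)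
    · exact Eventually.of_forall fun x => ((h.hasDerivD1 x).pow 2).sub
        ((((h.hasDerivF x).const_mul 2)).mul (h.hasDerivD2 x))
    · exact Eventually.of_forall fun x => (h.hasDerivD1 x).pow 3
    · filter_upwards [h.eventually_pos] with x hx
      exact (mul_pos (mul_pos three_pos (pow_pos hx.1 2)) hx.2).ne'
    · have hc : Continuous (fun x => (deriv F x) ^ 2 - 2 * F x * deriv (deriv F) x) :=
        (h.contD1.continuous.pow 2).sub
          ((continuous_const.mul h.contF).mul h.contD2.continuous)
      have := (hc.tendsto 0).mono_left (nhdsWithin_le_nhds (s := Ioi (0:ℝ)))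
      simp only [h.d0, h.f0] at this
      simpa using this
    · have := ((h.contD1.continuous.tendsto 0).pow 3).mono_left
        (nhdsWithin_le_nhds (s := Ioi (0:ℝ)))
      rwa [h.d0, zero_pow three_ne_zero] at this
    · have hB : Tendsto (fun x => -2 * deriv (deriv (deriv F)) x / (3 * deriv (deriv F) x))
          (𝓝[>] (0:ℝ)) (𝓝 (-2 * deriv (deriv (deriv F)) 0 / (3 * deriv (deriv F) 0))) := by
        apply Tendsto.div
          (((h.contD3.tendsto 0).const_mul (-2)).mono_left nhdsWithin_le_nhds)
          (((h.contD2.continuous.tendsto 0).const_mul 3).mono_left nhdsWithin_le_nhds)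
        exact (mul_pos three_pos h.dd0).ne'
      have hprod := h.tendsto_FdivSq.mul hB
      have heq : 1 / (2 * deriv (deriv F) 0)
          * (-2 * deriv (deriv (deriv F)) 0 / (3 * deriv (deriv F) 0))
          = -(deriv (deriv (deriv F)) 0) / (3 * (deriv (deriv F) 0) ^ 2) := by
        have : deriv (deriv F) 0 ≠ 0 := h.dd0.ne'
        field_simp
      rw [heq] at hprod
      apply hprod.congr'
      filter_upwards [h.eventually_pos] with x hx
      have h1 : deriv F x ≠ 0 := hx.1.ne'
      have h2 : deriv (deriv F) x ≠ 0 := hx.2.ne'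
      field_simp
      ring
  exact key

theorem tendsto_m_zero :
    Tendsto (mfun F xp) (𝓝[Ioo 0 E₀] (0:ℝ))
      (𝓝 (-(deriv (deriv (deriv F)) 0) / (3 * (deriv (deriv F) 0) ^ 2))) :=
  h.tendsto_G.comp h.tendsto_X_zero

theorem tendsto_psi_zero :
    Tendsto (psiP F xp) (𝓝[Ioo 0 E₀] (0:ℝ))
      (𝓝 (Real.sqrt (1 / (2 * deriv (deriv F) 0)))) := by
  have h1 : Tendsto (fun x => Real.sqrt (F x / (deriv F x) ^ 2)) (𝓝[>] (0:ℝ))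
      (𝓝 (Real.sqrt (1 / (2 * deriv (deriv F) 0)))) :=
    (Real.continuous_sqrt.tendsto _).comp h.tendsto_FdivSq
  have h2 := h1.comp h.tendsto_X_zero
  apply h2.congr'
  filter_upwards [self_mem_nhdsWithin] with v hv
  have hFx : F (Xinv F xp v) = v := (h.X_spec ⟨hv.1.le, hv.2.le⟩).2
  have hb : 0 < deriv F (Xinv F xp v) := h.derivF_pos_X hv
  simp only [Function.comp_apply, hFx, psiP]
  rw [Real.sqrt_div hv.1.le, Real.sqrt_sq hb.le]


open Real in
theorem vmem {E θ : ℝ} (hE : E ∈ Ioo 0 E₀) (hθ : θ ∈ Ioo 0 (π/2)) :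
    E * Real.sin θ ^ 2 ∈ Ioo 0 E := by
  have hπ := Real.pi_pos
  have hsin : 0 < Real.sin θ := Real.sin_pos_of_pos_of_lt_pi hθ.1 (by linarith [hθ.2])
  have hcos : 0 < Real.cos θ := Real.cos_pos_of_mem_Ioo ⟨by linarith [hθ.1], hθ.2⟩
  have hsq : Real.sin θ ^ 2 + Real.cos θ ^ 2 = 1 := Real.sin_sq_add_cos_sq θ
  constructor
  · exact mul_pos hE.1 (pow_pos hsin 2)
  · nlinarith [mul_pos hE.1 (pow_pos hcos 2), hsq, hE.1]

open Real in
theorem cosθpos {θ : ℝ} (hθ : θ ∈ Ioo 0 (π/2)) : 0 < Real.cos θ :=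
  Real.cos_pos_of_mem_Ioo ⟨by linarith [Real.pi_pos, hθ.1], hθ.2⟩

open Real in
theorem sinθpos {θ : ℝ} (hθ : θ ∈ Ioo 0 (π/2)) : 0 < Real.sin θ :=
  Real.sin_pos_of_pos_of_lt_pi hθ.1 (by linarith [Real.pi_pos, hθ.2])

open Real in
theorem hasDerivAt_sub (hE : E ∈ Ioo (0:ℝ) E₀) {θ : ℝ} (hθ : θ ∈ Ioo 0 (π/2)) :
    HasDerivAt (fun t => Xinv F xp (E * Real.sin t ^ 2))
      ((deriv F (Xinv F xp (E * Real.sin θ ^ 2)))⁻¹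
        * (E * (2 * Real.sin θ ^ 1 * Real.cos θ))) θ := by
  have hv : E * Real.sin θ ^ 2 ∈ Ioo 0 E₀ :=
    ⟨(h.vmem hE hθ).1, (h.vmem hE hθ).2.trans hE.2⟩
  have inner : HasDerivAt (fun t => E * Real.sin t ^ 2)
      (E * (2 * Real.sin θ ^ 1 * Real.cos θ)) θ :=
    ((Real.hasDerivAt_sin θ).pow 2).const_mul E
  exact ((h.hasStrictDerivAt_X hv).hasDerivAt.comp θ inner)

open Real in
theorem sub_strictMono (hE : E ∈ Ioo (0:ℝ) E₀) :
    StrictMonoOn (fun t => Xinv F xp (E * Real.sin t ^ 2)) (Ioo 0 (π/2)) := by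
  intro a ha b hb hab
  have hπ := Real.pi_pos
  have hsa : 0 < Real.sin a := h.sinθpos ha
  have hsin : Real.sin a < Real.sin b := by
    apply Real.strictMonoOn_sin ⟨by linarith [ha.1], by linarith [hb.2]⟩
      ⟨by linarith [hb.1], by linarith [hb.2]⟩ hab
  have hv : E * Real.sin a ^ 2 < E * Real.sin b ^ 2 := by
    have := pow_lt_pow_left₀ hsin hsa.le two_ne_zero
    exact mul_lt_mul_of_pos_left this hE.1
  exact h.X_strictMono
    ⟨(h.vmem hE ha).1.le, ((h.vmem hE ha).2.trans hE.2).le⟩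
    ⟨(h.vmem hE hb).1.le, ((h.vmem hE hb).2.trans hE.2).le⟩ hv

open Real in
theorem contX_on (hE : E ∈ Ioo (0:ℝ) E₀) : ContinuousOn (Xinv F xp) (Icc 0 E) := by
  intro v hv
  rcases hv.1.lt_or_eq with h1 | h1
  · exact (h.contX_at ⟨h1, hv.2.trans_lt hE.2⟩).continuousWithinAt
  · rw [← h1]
    exact h.contX_within_zero.mono (Icc_subset_Icc le_rfl hE.2.le)

open Real in
theorem sub_image (hE : E ∈ Ioo (0:ℝ) E₀) :
    (fun t => Xinv F xp (E * Real.sin t ^ 2)) '' Ioo 0 (π/2)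
      = Ioo 0 (Xinv F xp E) := by
  have hπ := Real.pi_pos
  set f := fun t => Xinv F xp (E * Real.sin t ^ 2) with hf
  have hcont : ContinuousOn f (Icc 0 (π/2)) := by
    apply (h.contX_on hE).comp
      (Continuous.continuousOn (by continuity))
    intro t ht
    have hs0 : 0 ≤ Real.sin t := Real.sin_nonneg_of_nonneg_of_le_pi ht.1 (by linarith [ht.2])
    have hs1 : Real.sin t ≤ 1 := Real.sin_le_one t
    show E * Real.sin t ^ 2 ∈ Icc 0 E
    constructor
    · exact mul_nonneg hE.1.le (sq_nonneg _)
    · have hsq1 : Real.sin t ^ 2 ≤ 1 := by nlinarith [hs0, hs1]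
      nlinarith [mul_nonneg hE.1.le (sub_nonneg.mpr hsq1)]
  have hf0 : f 0 = 0 := by simp [hf, Real.sin_zero, h.X_zero]
  have hfE : f (π/2) = Xinv F xp E := by simp [hf, Real.sin_pi_div_two]
  apply Subset.antisymm
  · rintro _ ⟨t, ht, rfl⟩
    have hv := h.vmem hE ht
    have hvE : E * Real.sin t ^ 2 ∈ Ioo 0 E₀ := ⟨hv.1, hv.2.trans hE.2⟩
    refine ⟨(h.X_mem_Ioo hvE).1, ?_⟩
    exact h.X_strictMono ⟨hv.1.le, (hv.2.trans hE.2).le⟩ ⟨hE.1.le, hE.2.le⟩ hv.2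
  · have := intermediate_value_Ioo (by linarith : (0:ℝ) ≤ π/2) hcont
    rw [hf0, hfE] at this
    exact this


open Real in
theorem integrand_eq (hE : E ∈ Ioo (0:ℝ) E₀) {θ : ℝ} (hθ : θ ∈ Ioo 0 (π/2)) :
    |(deriv F (Xinv F xp (E * Real.sin θ ^ 2)))⁻¹
        * (E * (2 * Real.sin θ ^ 1 * Real.cos θ))|
      * (1 / Real.sqrt (2 * (E - F (Xinv F xp (E * Real.sin θ ^ 2)))))
    = Real.sqrt 2 * psiP F xp (E * Real.sin θ ^ 2) := by
  have hv := h.vmem hE hθ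
  have hvE : E * Real.sin θ ^ 2 ∈ Ioo 0 E₀ := ⟨hv.1, hv.2.trans hE.2⟩
  have hb : 0 < deriv F (Xinv F xp (E * Real.sin θ ^ 2)) := h.derivF_pos_X hvE
  have hsin := h.sinθpos hθ
  have hcos := h.cosθpos hθ
  have hFx : F (Xinv F xp (E * Real.sin θ ^ 2)) = E * Real.sin θ ^ 2 :=
    (h.X_spec ⟨hvE.1.le, hvE.2.le⟩).2
  have habs : |(deriv F (Xinv F xp (E * Real.sin θ ^ 2)))⁻¹
      * (E * (2 * Real.sin θ ^ 1 * Real.cos θ))|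
      = (deriv F (Xinv F xp (E * Real.sin θ ^ 2)))⁻¹
      * (E * (2 * Real.sin θ ^ 1 * Real.cos θ)) := by
    apply abs_of_pos
    have h1 : (0:ℝ) < E := hE.1
    positivity
  rw [habs, hFx]
  have hsub : 2 * (E - E * Real.sin θ ^ 2) = (2 * E) * Real.cos θ ^ 2 := by
    linear_combination (-2*E) * Real.sin_sq_add_cos_sq θ
  rw [hsub, Real.sqrt_mul (mul_nonneg (by norm_num) hE.1.le), Real.sqrt_sq hcos.le]
  rw [psiP, Real.sqrt_mul hE.1.le, Real.sqrt_sq hsin.le]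
  rw [Real.sqrt_mul (by norm_num : (0:ℝ) ≤ 2)]
  have hsE : Real.sqrt E ^ 2 = E := Real.sq_sqrt hE.1.le
  have hs2 : Real.sqrt 2 ^ 2 = 2 := Real.sq_sqrt (by norm_num)
  have hsEpos : 0 < Real.sqrt E := Real.sqrt_pos.mpr hE.1
  have hs2pos : 0 < Real.sqrt 2 := Real.sqrt_pos.mpr (by norm_num)
  rw [pow_one]
  field_simp
  linear_combination
    (-(Real.sqrt E ^ 2)) * hs2
    + (-2) * hsE

open Real in
theorem changeVar (hE : E ∈ Ioo (0:ℝ) E₀) :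
    (∫ x in Ioo 0 (Xinv F xp E), (1:ℝ) / Real.sqrt (2 * (E - F x)))
      = ∫ θ in Ioo 0 (π/2), Real.sqrt 2 * psiP F xp (E * Real.sin θ ^ 2) := by
  have hder : ∀ θ ∈ Ioo 0 (π/2),
      HasDerivWithinAt (fun t => Xinv F xp (E * Real.sin t ^ 2))
        ((deriv F (Xinv F xp (E * Real.sin θ ^ 2)))⁻¹
          * (E * (2 * Real.sin θ ^ 1 * Real.cos θ))) (Ioo 0 (π/2)) θ :=
    fun θ hθ => (h.hasDerivAt_sub hE hθ).hasDerivWithinAt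
  have hinj := (h.sub_strictMono hE).injOn
  have := MeasureTheory.integral_image_eq_integral_abs_deriv_smul measurableSet_Ioo
    hder hinj (fun x => (1:ℝ) / Real.sqrt (2 * (E - F x)))
  rw [h.sub_image hE] at this
  rw [this]
  apply MeasureTheory.setIntegral_congr_fun measurableSet_Ioo
  intro θ hθ
  simp only [smul_eq_mul]
  exact h.integrand_eq hE hθ

open Real in
theorem changeVar_int (hE : E ∈ Ioo (0:ℝ) E₀) :
    IntegrableOn (fun x => (1:ℝ) / Real.sqrt (2 * (E - F x))) (Ioo 0 (Xinv F xp E)) ↔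
      IntegrableOn (fun θ => Real.sqrt 2 * psiP F xp (E * Real.sin θ ^ 2))
        (Ioo 0 (π/2)) := by
  have hder : ∀ θ ∈ Ioo 0 (π/2),
      HasDerivWithinAt (fun t => Xinv F xp (E * Real.sin t ^ 2))
        ((deriv F (Xinv F xp (E * Real.sin θ ^ 2)))⁻¹
          * (E * (2 * Real.sin θ ^ 1 * Real.cos θ))) (Ioo 0 (π/2)) θ :=
    fun θ hθ => (h.hasDerivAt_sub hE hθ).hasDerivWithinAt
  have hinj := (h.sub_strictMono hE).injOn
  have := MeasureTheory.integrableOn_image_iff_integrableOn_abs_deriv_smul measurableSet_Ioo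
    hder hinj (fun x => (1:ℝ) / Real.sqrt (2 * (E - F x)))
  rw [h.sub_image hE] at this
  rw [this]
  apply integrableOn_congr_fun _ measurableSet_Ioo
  intro θ hθ
  simp only [smul_eq_mul]
  exact h.integrand_eq hE hθ

theorem psi_pos {v : ℝ} (hv : v ∈ Ioo 0 E₀) : 0 < psiP F xp v :=
  div_pos (Real.sqrt_pos.mpr hv.1) (h.derivF_pos_X hv)

end GoodSide

/-- Derivative of a reflected function. -/
theorem reflect_deriv (f : ℝ → ℝ) (hf : Differentiable ℝ f) :
    deriv (fun x => f (-x)) = fun x => -(deriv f (-x)) := by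
  funext x
  have h1 : HasDerivAt (fun x => f (-x)) (deriv f (-x) * (-1)) x :=
    ((hf (-x)).hasDerivAt).comp x (hasDerivAt_neg' x)
  rw [h1.deriv]; ring

end ChiconeAux

set_option maxHeartbeats 2000000 in
open GoodSide Real in
theorem stmt1
    (F : ℝ → ℝ)
    (hF : ContDiff ℝ (⊤ : ℕ∞) F)
    (hF0 : F 0 = 0) (hF'0 : deriv F 0 = 0) (hF''0 : 0 < deriv (deriv F) 0)
    (E₀ : ℝ) (hE₀ : 0 < E₀)
    (xm xp : ℝ) (hxm : xm < 0) (hxp : 0 < xp)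
    (hFxm : F xm = E₀) (hFxp : F xp = E₀)
    (hF'pos : ∀ x ∈ Ioc 0 xp, 0 < deriv F x)
    (hF'neg : ∀ x ∈ Ico xm 0, deriv F x < 0)
    (xmE xpE : ℝ → ℝ)
    (hxmE : ∀ E ∈ Ioo 0 E₀, xmE E ∈ Ioo xm 0 ∧ F (xmE E) = E)
    (hxpE : ∀ E ∈ Ioo 0 E₀, xpE E ∈ Ioo 0 xp ∧ F (xpE E) = E)
    (T : ℝ → ℝ)
    (hT : ∀ E ∈ Ioo 0 E₀,
      T E = 2 * ∫ x in (xmE E)..(xpE E), 1 / Real.sqrt (2 * (E - F x))) :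
    ((∀ x ∈ Icc xm xp, 0 ≤ Nfun F x) →
      ∀ E₁ E₂, 0 < E₁ → E₁ ≤ E₂ → E₂ < E₀ → T E₁ ≤ T E₂) ∧
    ((∀ x ∈ Icc xm xp, Nfun F x ≤ 0) →
      ∀ E₁ E₂, 0 < E₁ → E₁ ≤ E₂ → E₂ < E₀ → T E₂ ≤ T E₁) := by
  classical
  -- basic smoothness
  have hsm : ContDiff ℝ ((⊤ : ℕ∞) : WithTop ℕ∞) F := hF.of_le (by simp)
  have hP : GoodSide F E₀ xp := ⟨hsm, hF0, hF'0, hF''0, hxp, hE₀, hFxp, hF'pos⟩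
  set Ft : ℝ → ℝ := fun x => F (-x) with hFt
  have hsmt : ContDiff ℝ ((⊤ : ℕ∞) : WithTop ℕ∞) Ft := hsm.comp contDiff_neg
  have hdiffF : Differentiable ℝ F := hsm.differentiable (by simp)
  have hdiffD1 : Differentiable ℝ (deriv F) :=
    hP.contD1.differentiable (by simp)
  have hdiffD2 : Differentiable ℝ (deriv (deriv F)) :=
    hP.contD2.differentiable (by simp)
  have hd1 : deriv Ft = fun x => -(deriv F (-x)) := reflect_deriv F hdiffF
  have hd2 : deriv (deriv Ft) = fun x => deriv (deriv F) (-x) := by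
    rw [hd1]
    have : (fun x => -(deriv F (-x))) = (fun x => (fun y => -(deriv F y)) (-x)) := rfl
    rw [this, reflect_deriv (fun y => -(deriv F y)) hdiffD1.neg]
    funext x
    simp [deriv.neg]
  have hd3 : deriv (deriv (deriv Ft)) = fun x => -(deriv (deriv (deriv F)) (-x)) := by
    rw [hd2]
    exact reflect_deriv _ hdiffD2
  have hQ : GoodSide Ft E₀ (-xm) := by
    refine ⟨hsmt, by show F (-0) = 0; rw [neg_zero]; exact hF0, ?_, ?_, by linarith, hE₀,
      by show F (-(-xm)) = E₀; rw [neg_neg]; exact hFxm, ?_⟩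
    · rw [hd1]; simpa using hF'0
    · rw [hd2]; simpa using hF''0
    · intro x hx
      rw [hd1]
      simp only [neg_pos]
      exact hF'neg (-x) ⟨by linarith [hx.2], by linarith [hx.1]⟩
  have hNt : ∀ x, Nfun Ft x = Nfun F (-x) := by
    intro x
    simp only [Nfun]
    rw [congrFun hd3 x, congrFun hd2 x, congrFun hd1 x,
      show Ft x = F (-x) from rfl]
    ring
  -- roots
  have hxpE_eq : ∀ E ∈ Ioo 0 E₀, xpE E = Xinv F xp E := by
    intro E hE
    obtain ⟨hmem, hval⟩ := hxpE E hE
    have := hP.X_leftInv ⟨hmem.1.le, hmem.2.le⟩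
    rw [hval] at this
    exact this.symm
  have hxmE_eq : ∀ E ∈ Ioo 0 E₀, xmE E = -(Xinv Ft (-xm) E) := by
    intro E hE
    obtain ⟨hmem, hval⟩ := hxmE E hE
    have h2 : -(xmE E) ∈ Icc 0 (-xm) := ⟨by linarith [hmem.2], by linarith [hmem.1]⟩
    have h3 := hQ.X_leftInv h2
    have h4 : Ft (-xmE E) = E := by show F (-(-xmE E)) = E; rw [neg_neg]; exact hval
    rw [h4] at h3
    rw [h3, neg_neg]
  -- the key function
  set Psi : ℝ → ℝ := fun v => psiP F xp v + psiP Ft (-xm) v with hPsi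
  set L : ℝ := -(deriv (deriv (deriv F)) 0) / (3 * (deriv (deriv F) 0) ^ 2) with hL
  set ℓ : ℝ := Real.sqrt (1 / (2 * deriv (deriv F) 0)) with hℓ
  have hm_P : Tendsto (mfun F xp) (𝓝[Ioo 0 E₀] 0) (𝓝 L) := hP.tendsto_m_zero
  have hm_Q : Tendsto (mfun Ft (-xm)) (𝓝[Ioo 0 E₀] 0) (𝓝 (-L)) := by
    have := hQ.tendsto_m_zero
    have heq : -(deriv (deriv (deriv Ft)) 0) / (3 * (deriv (deriv Ft) 0) ^ 2) = -L := by
      rw [congrFun hd3 0, congrFun hd2 0, hL, neg_zero]; ring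
    rwa [heq] at this
  have hpsi_Q : Tendsto (psiP Ft (-xm)) (𝓝[Ioo 0 E₀] 0) (𝓝 ℓ) := by
    have := hQ.tendsto_psi_zero
    have heq : Real.sqrt (1 / (2 * deriv (deriv Ft) 0)) = ℓ := by
      rw [congrFun hd2 0, neg_zero, hℓ]
    rwa [heq] at this
  have hPsi_tendsto : Tendsto Psi (𝓝[Ioo 0 E₀] 0) (𝓝 (ℓ + ℓ)) :=
    hP.tendsto_psi_zero.add hpsi_Q
  haveI hNB : (𝓝[Ioo (0:ℝ) E₀] (0:ℝ)).NeBot := by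
    rw [nhdsWithin_Ioo_eq_nhdsGT hE₀]; infer_instance
  have hDerivPsi : ∀ v ∈ Ioo (0:ℝ) E₀, HasDerivAt Psi
      ((mfun F xp v + mfun Ft (-xm) v) / (2 * Real.sqrt v)) v := by
    intro v hv
    have := (hP.hasDerivAt_psi hv).add (hQ.hasDerivAt_psi hv)
    rwa [← add_div] at this
  have hPsiCont : ContinuousOn Psi (Ioo 0 E₀) := fun v hv =>
    (hDerivPsi v hv).continuousAt.continuousWithinAt
  have hPsiDiff : DifferentiableOn ℝ Psi (Ioo 0 E₀) := fun v hv =>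
    (hDerivPsi v hv).differentiableAt.differentiableWithinAt
  have hPsi_pos : ∀ v ∈ Ioo (0:ℝ) E₀, 0 < Psi v := fun v hv =>
    add_pos (hP.psi_pos hv) (hQ.psi_pos hv)
  -- core representation
  have core : ∀ E ∈ Ioo (0:ℝ) E₀, ∀ C : ℝ, (∀ v ∈ Ioo 0 E₀, v < E → Psi v ≤ C) →
      IntegrableOn (fun θ => Psi (E * Real.sin θ ^ 2)) (Ioo 0 (π/2)) volume ∧
      T E = 2 * Real.sqrt 2 * ∫ θ in Ioo 0 (π/2), Psi (E * Real.sin θ ^ 2) := by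
    intro E hE C hC
    have hvmem : ∀ θ ∈ Ioo (0:ℝ) (π/2), E * Real.sin θ ^ 2 ∈ Ioo (0:ℝ) E₀ :=
      fun θ hθ => ⟨(hP.vmem hE hθ).1, (hP.vmem hE hθ).2.trans hE.2⟩
    have hinn : Continuous (fun θ : ℝ => E * Real.sin θ ^ 2) := by continuity
    have hcontP : ContinuousOn (fun θ => psiP F xp (E * Real.sin θ ^ 2)) (Ioo 0 (π/2)) := by
      intro θ hθ
      have h1 := (hP.hasDerivAt_psi (hvmem θ hθ)).continuousAt
      have h2 : ContinuousAt (fun θ : ℝ => E * Real.sin θ ^ 2) θ := hinn.continuousAt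
      exact (ContinuousAt.comp (x := θ) h1 h2).continuousWithinAt
    have hcontQ : ContinuousOn (fun θ => psiP Ft (-xm) (E * Real.sin θ ^ 2)) (Ioo 0 (π/2)) := by
      intro θ hθ
      have h1 := (hQ.hasDerivAt_psi (hvmem θ hθ)).continuousAt
      have h2 : ContinuousAt (fun θ : ℝ => E * Real.sin θ ^ 2) θ := hinn.continuousAt
      exact (ContinuousAt.comp (x := θ) h1 h2).continuousWithinAt
    have hcont : ContinuousOn (fun θ => Psi (E * Real.sin θ ^ 2)) (Ioo 0 (π/2)) :=
      hcontP.add hcontQ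
    -- integrability of the composite
    have hconst : IntegrableOn (fun _ : ℝ => C) (Ioo 0 (π/2)) volume :=
      integrableOn_const measure_Ioo_lt_top.ne
    have hIntPsi : IntegrableOn (fun θ => Psi (E * Real.sin θ ^ 2)) (Ioo 0 (π/2)) volume := by
      apply Integrable.mono' hconst (hcont.aestronglyMeasurable measurableSet_Ioo)
      apply (ae_restrict_iff' measurableSet_Ioo).mpr
      apply Eventually.of_forall
      intro θ hθ
      rw [Real.norm_eq_abs, abs_of_pos (hPsi_pos _ (hvmem θ hθ))]
      exact hC _ (hvmem θ hθ) (hP.vmem hE hθ).2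
    have hIntP : IntegrableOn (fun θ => psiP F xp (E * Real.sin θ ^ 2)) (Ioo 0 (π/2)) volume := by
      apply Integrable.mono' hIntPsi (hcontP.aestronglyMeasurable measurableSet_Ioo)
      apply (ae_restrict_iff' measurableSet_Ioo).mpr
      apply Eventually.of_forall
      intro θ hθ
      rw [Real.norm_eq_abs, abs_of_pos (hP.psi_pos (hvmem θ hθ))]
      simp only [hPsi]
      nlinarith [hQ.psi_pos (hvmem θ hθ)]
    have hIntQ : IntegrableOn (fun θ => psiP Ft (-xm) (E * Real.sin θ ^ 2))
        (Ioo 0 (π/2)) volume := by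
      apply Integrable.mono' hIntPsi (hcontQ.aestronglyMeasurable measurableSet_Ioo)
      apply (ae_restrict_iff' measurableSet_Ioo).mpr
      apply Eventually.of_forall
      intro θ hθ
      rw [Real.norm_eq_abs, abs_of_pos (hQ.psi_pos (hvmem θ hθ))]
      simp only [hPsi]
      nlinarith [hP.psi_pos (hvmem θ hθ)]
    refine ⟨hIntPsi, ?_⟩
    -- change of variables, positive side
    set g : ℝ → ℝ := fun x => 1 / Real.sqrt (2 * (E - F x)) with hg
    set b : ℝ := Xinv F xp E with hb
    set bq : ℝ := Xinv Ft (-xm) E with hbq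
    have hbpos : 0 < b := (hP.X_mem_Ioo hE).1
    have hbqpos : 0 < bq := (hQ.X_mem_Ioo hE).1
    have hcvP : ∫ x in Ioo 0 b, g x
        = ∫ θ in Ioo 0 (π/2), Real.sqrt 2 * psiP F xp (E * Real.sin θ ^ 2) :=
      hP.changeVar hE
    have hgiP : IntegrableOn g (Ioo 0 b) volume :=
      (hP.changeVar_int hE).mpr (hIntP.const_mul _)
    -- reflection for the negative side
    have hreflder : ∀ y ∈ Ioo (0:ℝ) bq,
        HasDerivWithinAt (fun x : ℝ => -x) (-1 : ℝ) (Ioo 0 bq) y :=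
      fun y _ => (hasDerivAt_neg' y).hasDerivWithinAt
    have hreflinj : InjOn (fun x : ℝ => -x) (Ioo 0 bq) := fun u _ v _ huv => by
      simpa using huv
    have hreflimg : (fun x : ℝ => -x) '' Ioo 0 bq = Ioo (-bq) 0 := by
      rw [show (fun x : ℝ => -x) = Neg.neg from rfl, Set.image_neg_Ioo, neg_zero]
    have hreflI := MeasureTheory.integral_image_eq_integral_abs_deriv_smul
      measurableSet_Ioo hreflder hreflinj g
    rw [hreflimg] at hreflI
    have hreflInt := MeasureTheory.integrableOn_image_iff_integrableOn_abs_deriv_smul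
      measurableSet_Ioo hreflder hreflinj g
    rw [hreflimg] at hreflInt
    have hgneg : ∀ y : ℝ, |(-1 : ℝ)| • g (-y) = 1 / Real.sqrt (2 * (E - Ft y)) := by
      intro y
      simp [hg, hFt]
    have hcvQ : ∫ x in Ioo (-bq) 0, g x
        = ∫ θ in Ioo 0 (π/2), Real.sqrt 2 * psiP Ft (-xm) (E * Real.sin θ ^ 2) := by
      rw [hreflI]
      rw [show (fun x => |(-1:ℝ)| • g (-x)) = fun y => 1 / Real.sqrt (2 * (E - Ft y)) from
        funext hgneg]
      exact hQ.changeVar hE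
    have hgiQ : IntegrableOn g (Ioo (-bq) 0) volume := by
      rw [hreflInt]
      rw [show (fun x => |(-1:ℝ)| • g (-x)) = fun y => 1 / Real.sqrt (2 * (E - Ft y)) from
        funext hgneg]
      exact (hQ.changeVar_int hE).mpr (hIntQ.const_mul _)
    -- split the interval integral
    have hTE := hT E hE
    have hab : xmE E = -bq := hxmE_eq E hE
    have hab' : xpE E = b := hxpE_eq E hE
    rw [hab, hab'] at hTE
    have hle : (-bq : ℝ) ≤ b := by linarith
    rw [intervalIntegral.integral_of_le hle, MeasureTheory.integral_Ioc_eq_integral_Ioo] at hTE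
    have hsplit : Ioo (-bq) b = Ioo (-bq) 0 ∪ Ico 0 b :=
      (Ioo_union_Ico_eq_Ioo (by linarith) hbpos.le).symm
    have hdisj : Disjoint (Ioo (-bq) (0:ℝ)) (Ico (0:ℝ) b) := by
      rw [Set.disjoint_left]
      intro x hx hx2
      exact absurd hx2.1 (not_le.mpr hx.2)
    have hgico : IntegrableOn g (Ico 0 b) volume :=
      (integrableOn_Ico_iff_integrableOn_Ioo).mpr hgiP
    rw [hsplit, MeasureTheory.setIntegral_union hdisj measurableSet_Ico hgiQ hgico] at hTE
    rw [MeasureTheory.integral_Ico_eq_integral_Ioo] at hTE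
    rw [hcvQ, hcvP] at hTE
    rw [hTE, ← MeasureTheory.integral_add (hIntQ.const_mul _) (hIntP.const_mul _)]
    have : ∀ θ : ℝ, Real.sqrt 2 * psiP Ft (-xm) (E * Real.sin θ ^ 2)
        + Real.sqrt 2 * psiP F xp (E * Real.sin θ ^ 2)
        = Real.sqrt 2 * Psi (E * Real.sin θ ^ 2) := by
      intro θ; simp only [hPsi]; ring
    simp_rw [this]
    rw [MeasureTheory.integral_const_mul]
    ring
  -- monotonicity of the m functions in each case, then conclude
  constructor
  · -- N ≥ 0 : T increasing
    intro hN E₁ E₂ h1 h2 h3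
    have hE₂ : E₂ ∈ Ioo (0:ℝ) E₀ := ⟨lt_of_lt_of_le h1 h2, h3⟩
    have hE₁ : E₁ ∈ Ioo (0:ℝ) E₀ := ⟨h1, lt_of_le_of_lt h2 h3⟩
    have hmonoP : MonotoneOn (mfun F xp) (Ioo 0 E₀) := by
      apply monotoneOn_of_deriv_nonneg (convex_Ioo 0 E₀)
        (fun v hv => (hP.hasDerivAt_m hv).continuousAt.continuousWithinAt)
        (fun v hv => by
          rw [interior_Ioo] at hv
          exact (hP.hasDerivAt_m hv).differentiableAt.differentiableWithinAt)
      intro v hv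
      rw [interior_Ioo] at hv
      rw [(hP.hasDerivAt_m hv).deriv]
      apply div_nonneg
      · apply hN
        have := hP.X_mem_Ioo hv
        exact ⟨by linarith [this.1], this.2.le⟩
      · exact pow_nonneg (hP.derivF_pos_X hv).le 5
    have hmonoQ : MonotoneOn (mfun Ft (-xm)) (Ioo 0 E₀) := by
      apply monotoneOn_of_deriv_nonneg (convex_Ioo 0 E₀)
        (fun v hv => (hQ.hasDerivAt_m hv).continuousAt.continuousWithinAt)
        (fun v hv => by
          rw [interior_Ioo] at hv
          exact (hQ.hasDerivAt_m hv).differentiableAt.differentiableWithinAt)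
      intro v hv
      rw [interior_Ioo] at hv
      rw [(hQ.hasDerivAt_m hv).deriv]
      apply div_nonneg
      · rw [hNt]
        apply hN
        have := hQ.X_mem_Ioo hv
        constructor
        · linarith [this.2]
        · linarith [this.1]
      · exact pow_nonneg (hQ.derivF_pos_X hv).le 5
    have hLle : ∀ v ∈ Ioo (0:ℝ) E₀, L ≤ mfun F xp v := by
      intro v hv
      apply le_of_tendsto hm_P
      filter_upwards [self_mem_nhdsWithin,
        (eventually_lt_nhds hv.1).filter_mono nhdsWithin_le_nhds] with w hw hw2
      exact hmonoP hw hv hw2.le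
    have hLleQ : ∀ v ∈ Ioo (0:ℝ) E₀, -L ≤ mfun Ft (-xm) v := by
      intro v hv
      apply le_of_tendsto hm_Q
      filter_upwards [self_mem_nhdsWithin,
        (eventually_lt_nhds hv.1).filter_mono nhdsWithin_le_nhds] with w hw hw2
      exact hmonoQ hw hv hw2.le
    have hPsiMono : MonotoneOn Psi (Ioo 0 E₀) := by
      apply monotoneOn_of_deriv_nonneg (convex_Ioo 0 E₀) hPsiCont
        (by rw [interior_Ioo]; exact hPsiDiff)
      intro v hv
      rw [interior_Ioo] at hv
      rw [(hDerivPsi v hv).deriv]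
      apply div_nonneg _ (by positivity)
      linarith [hLle v hv, hLleQ v hv]
    have hb1 : ∀ v ∈ Ioo (0:ℝ) E₀, v < E₁ → Psi v ≤ Psi E₂ :=
      fun v hv hlt => hPsiMono hv hE₂ (hlt.le.trans h2)
    have hb2 : ∀ v ∈ Ioo (0:ℝ) E₀, v < E₂ → Psi v ≤ Psi E₂ :=
      fun v hv hlt => hPsiMono hv hE₂ hlt.le
    obtain ⟨hi1, ht1⟩ := core E₁ hE₁ (Psi E₂) hb1
    obtain ⟨hi2, ht2⟩ := core E₂ hE₂ (Psi E₂) hb2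
    rw [ht1, ht2]
    apply mul_le_mul_of_nonneg_left _ (by positivity : (0:ℝ) ≤ 2 * Real.sqrt 2)
    apply MeasureTheory.setIntegral_mono_on hi1 hi2 measurableSet_Ioo
    intro θ hθ
    have hv1 : E₁ * Real.sin θ ^ 2 ∈ Ioo (0:ℝ) E₀ :=
      ⟨(hP.vmem hE₁ hθ).1, (hP.vmem hE₁ hθ).2.trans hE₁.2⟩
    have hv2 : E₂ * Real.sin θ ^ 2 ∈ Ioo (0:ℝ) E₀ :=
      ⟨(hP.vmem hE₂ hθ).1, (hP.vmem hE₂ hθ).2.trans hE₂.2⟩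
    exact hPsiMono hv1 hv2 (mul_le_mul_of_nonneg_right h2 (sq_nonneg _))
  · -- N ≤ 0 : T decreasing
    intro hN E₁ E₂ h1 h2 h3
    have hE₂ : E₂ ∈ Ioo (0:ℝ) E₀ := ⟨lt_of_lt_of_le h1 h2, h3⟩
    have hE₁ : E₁ ∈ Ioo (0:ℝ) E₀ := ⟨h1, lt_of_le_of_lt h2 h3⟩
    have hmonoP : AntitoneOn (mfun F xp) (Ioo 0 E₀) := by
      apply antitoneOn_of_deriv_nonpos (convex_Ioo 0 E₀)
        (fun v hv => (hP.hasDerivAt_m hv).continuousAt.continuousWithinAt)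
        (fun v hv => by
          rw [interior_Ioo] at hv
          exact (hP.hasDerivAt_m hv).differentiableAt.differentiableWithinAt)
      intro v hv
      rw [interior_Ioo] at hv
      rw [(hP.hasDerivAt_m hv).deriv]
      apply div_nonpos_of_nonpos_of_nonneg
      · apply hN
        have := hP.X_mem_Ioo hv
        exact ⟨by linarith [this.1], this.2.le⟩
      · exact pow_nonneg (hP.derivF_pos_X hv).le 5
    have hmonoQ : AntitoneOn (mfun Ft (-xm)) (Ioo 0 E₀) := by
      apply antitoneOn_of_deriv_nonpos (convex_Ioo 0 E₀)
        (fun v hv => (hQ.hasDerivAt_m hv).continuousAt.continuousWithinAt)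
        (fun v hv => by
          rw [interior_Ioo] at hv
          exact (hQ.hasDerivAt_m hv).differentiableAt.differentiableWithinAt)
      intro v hv
      rw [interior_Ioo] at hv
      rw [(hQ.hasDerivAt_m hv).deriv]
      apply div_nonpos_of_nonpos_of_nonneg
      · rw [hNt]
        apply hN
        have := hQ.X_mem_Ioo hv
        constructor
        · linarith [this.2]
        · linarith [this.1]
      · exact pow_nonneg (hQ.derivF_pos_X hv).le 5
    have hLge : ∀ v ∈ Ioo (0:ℝ) E₀, mfun F xp v ≤ L := by
      intro v hv
      apply ge_of_tendsto hm_P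
      filter_upwards [self_mem_nhdsWithin,
        (eventually_lt_nhds hv.1).filter_mono nhdsWithin_le_nhds] with w hw hw2
      exact hmonoP hw hv hw2.le
    have hLgeQ : ∀ v ∈ Ioo (0:ℝ) E₀, mfun Ft (-xm) v ≤ -L := by
      intro v hv
      apply ge_of_tendsto hm_Q
      filter_upwards [self_mem_nhdsWithin,
        (eventually_lt_nhds hv.1).filter_mono nhdsWithin_le_nhds] with w hw hw2
      exact hmonoQ hw hv hw2.le
    have hPsiAnti : AntitoneOn Psi (Ioo 0 E₀) := by
      apply antitoneOn_of_deriv_nonpos (convex_Ioo 0 E₀) hPsiCont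
        (by rw [interior_Ioo]; exact hPsiDiff)
      intro v hv
      rw [interior_Ioo] at hv
      rw [(hDerivPsi v hv).deriv]
      apply div_nonpos_of_nonpos_of_nonneg _ (by positivity)
      linarith [hLge v hv, hLgeQ v hv]
    have hbound : ∀ v ∈ Ioo (0:ℝ) E₀, Psi v ≤ ℓ + ℓ := by
      intro v hv
      apply ge_of_tendsto hPsi_tendsto
      filter_upwards [self_mem_nhdsWithin,
        (eventually_lt_nhds hv.1).filter_mono nhdsWithin_le_nhds] with w hw hw2
      exact hPsiAnti hw hv hw2.le
    obtain ⟨hi1, ht1⟩ := core E₁ hE₁ (ℓ + ℓ) (fun v hv _ => hbound v hv)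
    obtain ⟨hi2, ht2⟩ := core E₂ hE₂ (ℓ + ℓ) (fun v hv _ => hbound v hv)
    rw [ht1, ht2]
    apply mul_le_mul_of_nonneg_left _ (by positivity : (0:ℝ) ≤ 2 * Real.sqrt 2)
    apply MeasureTheory.setIntegral_mono_on hi2 hi1 measurableSet_Ioo
    intro θ hθ
    have hv1 : E₁ * Real.sin θ ^ 2 ∈ Ioo (0:ℝ) E₀ :=
      ⟨(hP.vmem hE₁ hθ).1, (hP.vmem hE₁ hθ).2.trans hE₁.2⟩
    have hv2 : E₂ * Real.sin θ ^ 2 ∈ Ioo (0:ℝ) E₀ :=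
      ⟨(hP.vmem hE₂ hθ).1, (hP.vmem hE₂ hθ).2.trans hE₂.2⟩
    exact hPsiAnti hv1 hv2 (mul_le_mul_of_nonneg_right h2 (sq_nonneg _))
end

section
/- For every y ∈ (0, y₀] the following identity holds: g'(y²/2)² · f(G(y)) · f'(G(y)) + g''(y²/2) · f(G(y))² = (2G(y)G''(y) − G'(y)²) / (4G(y)²). -/
open Set ContDiff

theorem stmt3
    (G g f : ℝ → ℝ)
    (hG : ContDiff ℝ (⊤ : ℕ∞) G) (hGeven : ∀ y, G (-y) = G y)
    (y₀ : ℝ) (hy₀ : 0 < y₀)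
    (hGpos : ∀ y ∈ Ioc 0 y₀, 0 < G y)
    (hG'pos : ∀ y ∈ Ioc 0 y₀, 0 < deriv G y)
    (hg : ContDiff ℝ (⊤ : ℕ∞) g)
    (hGg : ∀ y : ℝ, |y| ≤ y₀ → G y = g (y ^ 2 / 2))
    (V : Set ℝ) (hV : IsOpen V) (hVsub : Ioc 0 (G y₀) ⊆ V)
    (hf : ContDiffOn ℝ (⊤ : ℕ∞) f V)
    (hfG : ∀ y ∈ Ioc 0 y₀, 2 * G y * (f (G y)) ^ 2 = y ^ 2) :
    ∀ y ∈ Ioc 0 y₀,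
      (deriv g (y ^ 2 / 2)) ^ 2 * f (G y) * deriv f (G y)
        + deriv (deriv g) (y ^ 2 / 2) * (f (G y)) ^ 2 =
      (2 * G y * deriv (deriv G) y - (deriv G y) ^ 2) / (4 * (G y) ^ 2) := by
  have hg' : ContDiff ℝ ∞ g := hg.of_le (by simp)
  have hG' : ContDiff ℝ ∞ G := hG.of_le (by simp)
  have hgd : Differentiable ℝ g := hg'.differentiable (by norm_num)
  have hg1 : ContDiff ℝ ∞ (deriv g) := (contDiff_infty_iff_deriv.mp hg').2
  have hg1d : Differentiable ℝ (deriv g) := hg1.differentiable (by norm_num)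
  have hg2c : Continuous (deriv (deriv g)) := ((contDiff_infty_iff_deriv.mp hg1).2).continuous
  have hGd : Differentiable ℝ G := hG'.differentiable (by norm_num)
  have hG1 : ContDiff ℝ ∞ (deriv G) := (contDiff_infty_iff_deriv.mp hG').2
  have hG2c : Continuous (deriv (deriv G)) := ((contDiff_infty_iff_deriv.mp hG1).2).continuous
  have hfdiff : ∀ x ∈ V, HasDerivAt f (deriv f x) x := fun x hx =>
    ((hf.differentiableOn (by simp)).differentiableAt (hV.mem_nhds hx)).hasDerivAt
  have hfc : ContinuousOn f V := hf.continuousOn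
  have hfc' : ContinuousOn (deriv f) V := hf.continuousOn_deriv_of_isOpen hV (by simp)
  have hmono : StrictMonoOn G (Icc 0 y₀) := by
    apply strictMonoOn_of_deriv_pos (convex_Icc 0 y₀) hGd.continuous.continuousOn
    intro x hx
    rw [interior_Icc] at hx
    exact hG'pos x ⟨hx.1, hx.2.le⟩
  have hGV : ∀ y ∈ Ioc 0 y₀, G y ∈ V := by
    intro y hy
    refine hVsub ⟨hGpos y hy, ?_⟩
    rcases eq_or_lt_of_le hy.2 with h | h
    · rw [h]
    · exact (hmono ⟨hy.1.le, hy.2⟩ ⟨hy₀.le, le_rfl⟩ h).le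
  -- derivative of t ↦ t^2/2
  have hsq : ∀ t : ℝ, HasDerivAt (fun s : ℝ => s ^ 2 / 2) t t := by
    intro t
    have h := (hasDerivAt_pow 2 t).div_const 2
    norm_num at h
    exact h
  -- first and second derivative of G on the open interval
  have hCt : ∀ t ∈ Ioo (-y₀) y₀, deriv G t = deriv g (t ^ 2 / 2) * t := by
    intro t ht
    have hEv : G =ᶠ[nhds t] fun s => g (s ^ 2 / 2) := by
      filter_upwards [isOpen_Ioo.mem_nhds ht] with s hs
      exact hGg s (abs_le.mpr ⟨hs.1.le, hs.2.le⟩)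
    have h2 : HasDerivAt (fun s => g (s ^ 2 / 2)) (deriv g (t ^ 2 / 2) * t) t :=
      (hgd (t ^ 2 / 2)).hasDerivAt.comp t (hsq t)
    rw [hEv.deriv_eq, h2.deriv]
  have key : ∀ y ∈ Ioo 0 y₀,
      (deriv g (y ^ 2 / 2)) ^ 2 * f (G y) * deriv f (G y)
        + deriv (deriv g) (y ^ 2 / 2) * (f (G y)) ^ 2 =
      (2 * G y * deriv (deriv G) y - (deriv G y) ^ 2) / (4 * (G y) ^ 2) := by
    intro y hy
    have hyIoc : y ∈ Ioc 0 y₀ := ⟨hy.1, hy.2.le⟩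
    have hyIoo : y ∈ Ioo (-y₀) y₀ := ⟨lt_trans (neg_neg_of_pos hy₀) hy.1, hy.2⟩
    have hcpos : 0 < G y := hGpos y hyIoc
    have hGyV : G y ∈ V := hGV y hyIoc
    set u := y ^ 2 / 2 with hu
    set c := G y with hc
    set F := f (G y) with hF
    set F' := deriv f (G y) with hF'
    set a := deriv g u with ha
    set b := deriv (deriv g) u with hb
    have hC : deriv G y = a * y := hCt y hyIoo
    have hD : deriv (deriv G) y = a + y ^ 2 * b := by
      have hEv : deriv G =ᶠ[nhds y] fun t => deriv g (t ^ 2 / 2) * t := by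
        filter_upwards [isOpen_Ioo.mem_nhds hyIoo] with t ht
        exact hCt t ht
      have h2 : HasDerivAt (fun t : ℝ => deriv g (t ^ 2 / 2)) (b * y) y :=
        by have := (hg1d u).hasDerivAt.comp y (hsq y); exact this
      have h3 : HasDerivAt (fun t : ℝ => deriv g (t ^ 2 / 2) * t)
          (b * y * y + a * 1) y := h2.mul (hasDerivAt_id y)
      rw [hEv.deriv_eq, h3.deriv]
      ring
    -- differentiate the functional equation
    have hEv0 : (fun t => 2 * G t * f (G t) ^ 2 - t ^ 2) =ᶠ[nhds y] fun _ => (0 : ℝ) := by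
      filter_upwards [isOpen_Ioo.mem_nhds (⟨hy.1, hy.2⟩ : y ∈ Ioo 0 y₀)] with t ht
      have := hfG t ⟨ht.1, ht.2.le⟩
      linarith
    have hfG' : HasDerivAt (fun t => f (G t)) (F' * deriv G y) y :=
      (hfdiff _ hGyV).comp y (hGd y).hasDerivAt
    have h4 : HasDerivAt (fun t => 2 * G t * f (G t) ^ 2 - t ^ 2)
        ((2 * deriv G y) * F ^ 2 + (2 * c) * ((2 : ℕ) * F ^ 1 * (F' * deriv G y)) - 2 * y ^ 1) y := by
      have hGmul : HasDerivAt (fun t => 2 * G t) (2 * deriv G y) y :=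
        ((hGd y).hasDerivAt.const_mul 2)
      exact (hGmul.mul (hfG'.pow 2)).sub (hasDerivAt_pow 2 y)
    have hB0 : (2 * deriv G y) * F ^ 2 + (2 * c) * ((2 : ℕ) * F ^ 1 * (F' * deriv G y)) - 2 * y ^ 1 = 0 := by
      rw [← h4.deriv, hEv0.deriv_eq, deriv_const]
    have hyne : y ≠ 0 := ne_of_gt hy.1
    have hB' : a * F ^ 2 + 2 * a * c * F * F' = 1 := by
      rw [hC] at hB0
      have h2 : y * (a * F ^ 2 + 2 * a * c * F * F') = y * 1 := by
        push_cast at hB0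
        linear_combination hB0 / 2
      have := mul_left_cancel₀ hyne h2
      linarith
    have hA : 2 * c * F ^ 2 = y ^ 2 := hfG y hyIoc
    rw [hD, hC, eq_div_iff (by positivity : (4 * c ^ 2 : ℝ) ≠ 0)]
    linear_combination (2 * a * c) * hB' + (2 * b * c - a ^ 2) * hA
  intro y hy
  rcases lt_or_eq_of_le hy.2 with h | h
  · exact key y ⟨hy.1, h⟩
  · subst h
    have hGyV : G y ∈ V := hGV y ⟨hy.1, le_rfl⟩
    set L : ℝ → ℝ := fun t =>
      (deriv g (t ^ 2 / 2)) ^ 2 * f (G t) * deriv f (G t)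
        + deriv (deriv g) (t ^ 2 / 2) * (f (G t)) ^ 2 with hL
    set R : ℝ → ℝ := fun t =>
      (2 * G t * deriv (deriv G) t - (deriv G t) ^ 2) / (4 * (G t) ^ 2) with hR
    show L y = R y
    have hsc : Continuous (fun t : ℝ => t ^ 2 / 2) := by continuity
    have hLc : ContinuousAt L y := by
      have h1 : ContinuousAt (fun t => f (G t)) y :=
        (hfc.continuousAt (hV.mem_nhds hGyV)).comp hGd.continuous.continuousAt
      have h2 : ContinuousAt (fun t => deriv f (G t)) y :=
        (hfc'.continuousAt (hV.mem_nhds hGyV)).comp hGd.continuous.continuousAt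
      have h3 : ContinuousAt (fun t : ℝ => deriv g (t ^ 2 / 2)) y :=
        hg1.continuous.continuousAt.comp hsc.continuousAt
      have h4 : ContinuousAt (fun t : ℝ => deriv (deriv g) (t ^ 2 / 2)) y :=
        hg2c.continuousAt.comp hsc.continuousAt
      exact ((h3.pow 2).mul h1 |>.mul h2).add (h4.mul (h1.pow 2))
    have hRc : ContinuousAt R y := by
      have hden : ContinuousAt (fun t : ℝ => 4 * (G t) ^ 2) y := by
        exact (continuousAt_const.mul ((hGd.continuous.continuousAt).pow 2))
      have hnum : ContinuousAt (fun t : ℝ => 2 * G t * deriv (deriv G) t - (deriv G t) ^ 2) y := by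
        exact ((continuousAt_const.mul hGd.continuous.continuousAt).mul hG2c.continuousAt).sub
          ((hG1.continuous.continuousAt).pow 2)
      exact hnum.div hden (by have := hGpos y ⟨hy.1, le_rfl⟩; positivity)
    have hmemcl : y ∈ closure (Ioo (0 : ℝ) y) := by
      rw [closure_Ioo (ne_of_lt hy.1)]
      exact ⟨hy.1.le, le_rfl⟩
    have hne : (nhdsWithin y (Ioo (0 : ℝ) y)).NeBot :=
      mem_closure_iff_nhdsWithin_neBot.mp hmemcl
    have hEvLR : L =ᶠ[nhdsWithin y (Ioo (0 : ℝ) y)] R := by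
      filter_upwards [self_mem_nhdsWithin] with t ht
      exact key t ht
    have t1 : Filter.Tendsto L (nhdsWithin y (Ioo (0 : ℝ) y)) (nhds (L y)) :=
      hLc.continuousWithinAt.tendsto
    have t2 : Filter.Tendsto R (nhdsWithin y (Ioo (0 : ℝ) y)) (nhds (R y)) :=
      hRc.continuousWithinAt.tendsto
    have t1' : Filter.Tendsto R (nhdsWithin y (Ioo (0 : ℝ) y)) (nhds (L y)) :=
      t1.congr' hEvLR
    exact tendsto_nhds_unique t1' t2
end

section
/- Let a, b, u₀, k be positive real numbers with a/u₀ = b/k, and for x ∈ (−u₀, k) set F(x) = a·ln(u₀/(u₀ + x)) + b·ln(k/(k − x)) and N(x) = 6F(x)F''(x)² − 3F'(x)²F''(x) − 2F(x)F'(x)F'''(x). Then N(x) → +∞ as x → −u₀ from the right, and N(x) → +∞ as x → k from the left. -/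
/-- The potential of the oscillating heat pipe model,
`F(x) = a·ln(u₀/(u₀ + x)) + b·ln(k/(k − x))`. -/
noncomputable def Fohp (a b u₀ k : ℝ) : ℝ → ℝ := fun x =>
  a * Real.log (u₀ / (u₀ + x)) + b * Real.log (k / (k - x))

/-!
Near `x = −u₀`, write `s = u₀ + x`. Then `F' ≈ −a/s`, `F'' ≈ a/s²` and `F''' ≈ −2a/s³`, while
`F(x) → +∞` logarithmically, so `s⁴ N(x) ≈ (6a² − 4a²) F(x) → +∞`. The endpoint `k` reduces to this
one through the reflection `x ↦ −x`, which exchanges `(a, u₀)` with `(b, k)` and commutes with `N`.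
-/

open Filter Set Topology

theorem hasDerivAt_deriv_of_forall_hasDerivAt {𝕜 E : Type*} [NontriviallyNormedField 𝕜]
    [NormedAddCommGroup E] [NormedSpace 𝕜 E] {f g h : 𝕜 → E} {s : Set 𝕜} (hs : IsOpen s)
    (hf : ∀ y ∈ s, HasDerivAt f (g y) y) (hg : ∀ y ∈ s, HasDerivAt g (h y) y) :
    ∀ y ∈ s, HasDerivAt (deriv f) (h y) y := fun y hy =>
  (hg y hy).congr_of_eventuallyEq <|
    eventually_of_mem (hs.mem_nhds hy) fun z hz => (hf z hz).deriv

theorem tendsto_add_nhdsGT_neg (c : ℝ) :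
    Tendsto (fun x => c + x) (𝓝[>] (-c)) (𝓝[>] 0) :=
  tendsto_nhdsWithin_of_tendsto_nhds_of_eventually_within _
    (((continuous_const_add c).tendsto' _ _ (add_neg_cancel c)).mono_left nhdsWithin_le_nhds)
    (eventually_nhdsWithin_of_forall fun x hx => by simp_all [mem_Ioi]; linarith)

theorem Nfun_comp_neg (F : ℝ → ℝ) : Nfun (fun x => F (-x)) = fun x => Nfun F (-x) := by
  have h1 : deriv (fun x => F (-x)) = fun x => -deriv F (-x) :=
    funext fun x => deriv_comp_neg F x
  have h2 : deriv (deriv fun x => F (-x)) = fun x => deriv (deriv F) (-x) := by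
    funext x
    rw [h1, deriv.fun_neg, deriv_comp_neg, neg_neg]
  have h3 : deriv (deriv (deriv fun x => F (-x))) = fun x => -deriv (deriv (deriv F)) (-x) := by
    funext x
    rw [h2, deriv_comp_neg]
  funext x
  rw [Nfun, Nfun, h3, h2, h1]
  ring

theorem Fohp_comp_neg (a b u₀ k : ℝ) : (fun x => Fohp a b u₀ k (-x)) = Fohp b a k u₀ := by
  funext x
  rw [Fohp, Fohp, sub_neg_eq_add, ← sub_eq_add_neg, add_comm]

section Fohp

variable {a b u₀ k x : ℝ}

theorem hasDerivAt_Fohp (hu₀ : u₀ ≠ 0) (hk : k ≠ 0) (hux : u₀ + x ≠ 0) (hkx : k - x ≠ 0) :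
    HasDerivAt (Fohp a b u₀ k) (b / (k - x) - a / (u₀ + x)) x := by
  have hl := (hasDerivAt_const x u₀).fun_div ((hasDerivAt_id' x).const_add u₀) hux
  have hr := (hasDerivAt_const x k).fun_div ((hasDerivAt_id' x).const_sub k) hkx
  refine (((hl.log (div_ne_zero hu₀ hux)).const_mul a).add
    ((hr.log (div_ne_zero hk hkx)).const_mul b)).congr_deriv ?_
  field_simp
  ring

theorem hasDerivAt_Fohp_deriv_expr (hux : u₀ + x ≠ 0) (hkx : k - x ≠ 0) :
    HasDerivAt (fun y => b / (k - y) - a / (u₀ + y)) (b / (k - x) ^ 2 + a / (u₀ + x) ^ 2) x := by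
  have hl := (hasDerivAt_const x a).fun_div ((hasDerivAt_id' x).const_add u₀) hux
  have hr := (hasDerivAt_const x b).fun_div ((hasDerivAt_id' x).const_sub k) hkx
  refine (hr.sub hl).congr_deriv ?_
  field_simp
  ring

theorem hasDerivAt_Fohp_deriv2_expr (hux : u₀ + x ≠ 0) (hkx : k - x ≠ 0) :
    HasDerivAt (fun y => b / (k - y) ^ 2 + a / (u₀ + y) ^ 2)
      (2 * b / (k - x) ^ 3 - 2 * a / (u₀ + x) ^ 3) x := by
  have hl := (hasDerivAt_const x a).fun_div (((hasDerivAt_id' x).const_add u₀).fun_pow 2)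
    (pow_ne_zero 2 hux)
  have hr := (hasDerivAt_const x b).fun_div (((hasDerivAt_id' x).const_sub k).fun_pow 2)
    (pow_ne_zero 2 hkx)
  refine (hr.add hl).congr_deriv ?_
  field_simp
  ring

/-- `(u₀ + x)⁴ N(x)` in terms of `F = F(x)` and `t = (u₀ + x)/(k − x)`: the rescaled derivatives
`(u₀ + x) F'`, `(u₀ + x)² F''`, `(u₀ + x)³ F'''` are `bt − a`, `bt² + a`, `2bt³ − 2a`. -/
def scaledChicone (a b F t : ℝ) : ℝ :=
  F * (6 * (b * t ^ 2 + a) ^ 2 - 2 * (b * t - a) * (2 * b * t ^ 3 - 2 * a))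
    - 3 * (b * t - a) ^ 2 * (b * t ^ 2 + a)

theorem Nfun_Fohp_eq_scaledChicone_div (hu₀ : u₀ ≠ 0) (hk : k ≠ 0) (hx : x ∈ Ioo (-u₀) k) :
    Nfun (Fohp a b u₀ k) x
      = scaledChicone a b (Fohp a b u₀ k x) ((u₀ + x) / (k - x)) / (u₀ + x) ^ 4 := by
  have hne : ∀ y ∈ Ioo (-u₀) k, u₀ + y ≠ 0 ∧ k - y ≠ 0 := fun y hy =>
    ⟨by linarith [hy.1], by linarith [hy.2]⟩
  have h1 : ∀ y ∈ Ioo (-u₀) k, HasDerivAt (Fohp a b u₀ k) (b / (k - y) - a / (u₀ + y)) y :=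
    fun y hy => hasDerivAt_Fohp hu₀ hk (hne y hy).1 (hne y hy).2
  have h2 := hasDerivAt_deriv_of_forall_hasDerivAt isOpen_Ioo h1
    fun y hy => hasDerivAt_Fohp_deriv_expr (hne y hy).1 (hne y hy).2
  have h3 := hasDerivAt_deriv_of_forall_hasDerivAt isOpen_Ioo h2
    fun y hy => hasDerivAt_Fohp_deriv2_expr (hne y hy).1 (hne y hy).2
  rw [Nfun, (h1 x hx).deriv, (h2 x hx).deriv, (h3 x hx).deriv, scaledChicone]
  obtain ⟨hs, hr⟩ := hne x hx
  field_simp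
  ring

theorem tendsto_scaledChicone_atTop {α : Type*} {l : Filter α} {F t : α → ℝ} (ha : 0 < a)
    (hF : Tendsto F l atTop) (ht : Tendsto t l (𝓝 0)) :
    Tendsto (fun y => scaledChicone a b (F y) (t y)) l atTop := by
  have hcoef : Tendsto (fun y => 6 * (b * t y ^ 2 + a) ^ 2
      - 2 * (b * t y - a) * (2 * b * t y ^ 3 - 2 * a)) l (𝓝 (2 * a ^ 2)) :=
    ((by fun_prop : Continuous fun t : ℝ => 6 * (b * t ^ 2 + a) ^ 2
      - 2 * (b * t - a) * (2 * b * t ^ 3 - 2 * a)).tendsto' 0 _ (by ring)).comp ht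
  have hrest : Tendsto (fun y => 3 * (b * t y - a) ^ 2 * (b * t y ^ 2 + a)) l (𝓝 (3 * a ^ 3)) :=
    ((by fun_prop : Continuous fun t : ℝ => 3 * (b * t - a) ^ 2 * (b * t ^ 2 + a)).tendsto'
      0 _ (by ring)).comp ht
  simpa only [scaledChicone, sub_eq_add_neg] using
    (hF.atTop_mul_pos (by positivity) hcoef).atTop_add hrest.neg

theorem tendsto_Fohp_nhdsGT (ha : 0 < a) (hu₀ : 0 < u₀) (hk : 0 < k) :
    Tendsto (Fohp a b u₀ k) (𝓝[>] (-u₀)) atTop := by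
  have hsing : Tendsto (fun x => a * Real.log (u₀ / (u₀ + x))) (𝓝[>] (-u₀)) atTop := by
    simpa only [div_eq_mul_inv, Function.comp_def] using (Real.tendsto_log_atTop.comp
      ((tendsto_inv_nhdsGT_zero.comp (tendsto_add_nhdsGT_neg u₀)).const_mul_atTop hu₀)
      ).const_mul_atTop ha
  have hreg : ContinuousAt (fun x => b * Real.log (k / (k - x))) (-u₀) := by
    have hpos : 0 < k - -u₀ := by linarith
    exact continuousAt_const.mul
      ((continuousAt_const.div (continuousAt_const.sub continuousAt_id) hpos.ne').log
        (div_pos hk hpos).ne')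
  exact hsing.atTop_add (hreg.tendsto.mono_left nhdsWithin_le_nhds)

theorem tendsto_Nfun_Fohp_nhdsGT (ha : 0 < a) (hu₀ : 0 < u₀) (hk : 0 < k) :
    Tendsto (Nfun (Fohp a b u₀ k)) (𝓝[>] (-u₀)) atTop := by
  have hF := tendsto_Fohp_nhdsGT (b := b) ha hu₀ hk
  have ht : Tendsto (fun x => (u₀ + x) / (k - x)) (𝓝[>] (-u₀)) (𝓝 0) := by
    have hne : k - -u₀ ≠ 0 := by linarith
    have hc : ContinuousAt (fun x => (u₀ + x) / (k - x)) (-u₀) := by fun_prop (disch := exact hne)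
    simpa using hc.tendsto.mono_left nhdsWithin_le_nhds
  have hpow : Tendsto (fun x => ((u₀ + x)⁻¹) ^ 4) (𝓝[>] (-u₀)) atTop :=
    (tendsto_pow_atTop four_ne_zero).comp
      (tendsto_inv_nhdsGT_zero.comp (tendsto_add_nhdsGT_neg u₀))
  refine ((tendsto_scaledChicone_atTop (b := b) ha hF ht).atTop_mul_atTop₀ hpow).congr' ?_
  filter_upwards [Ioo_mem_nhdsGT (by linarith : -u₀ < k)] with x hx
  rw [Nfun_Fohp_eq_scaledChicone_div hu₀.ne' hk.ne' hx, div_eq_mul_inv _ ((u₀ + x) ^ 4), inv_pow]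

end Fohp

theorem stmt19_general (a b u₀ k : ℝ) (ha : 0 < a) (hb : 0 < b) (hu₀ : 0 < u₀) (hk : 0 < k) :
    Filter.Tendsto (Nfun (Fohp a b u₀ k)) (nhdsWithin (-u₀) (Set.Ioi (-u₀))) Filter.atTop ∧
    Filter.Tendsto (Nfun (Fohp a b u₀ k)) (nhdsWithin k (Set.Iio k)) Filter.atTop := by
  refine ⟨tendsto_Nfun_Fohp_nhdsGT ha hu₀ hk, ?_⟩
  have hright := (tendsto_Nfun_Fohp_nhdsGT (b := a) hb hk hu₀).comp (tendsto_neg_nhdsLT (a := k))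
  rw [← Fohp_comp_neg a b u₀ k, Nfun_comp_neg] at hright
  simpa [Function.comp_def] using hright

theorem stmt19 (a b u₀ k : ℝ) (ha : 0 < a) (hb : 0 < b) (hu₀ : 0 < u₀) (hk : 0 < k)
    (hcenter : a / u₀ = b / k) :
    Filter.Tendsto (Nfun (Fohp a b u₀ k)) (nhdsWithin (-u₀) (Set.Ioi (-u₀))) Filter.atTop ∧
    Filter.Tendsto (Nfun (Fohp a b u₀ k)) (nhdsWithin k (Set.Iio k)) Filter.atTop :=
  stmt19_general a b u₀ k ha hb hu₀ hk
end
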